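/- arXiv:1009.1909 — 3 statements merged into one kernel-verified Lean document; each statement's English description precedes it below -/
import Mathlib

section
/- Suppose Ψ is convex, decreasing, and bounded below on the set of k×k real symmetric positive definite matrices. Then inf{Φ̂(M(w)) : w ∈ Ω, Range(K) ⊆ Range(M(w))} = inf{Ψ((K^T M(w)^{-1} K)^{-1}) : w ∈ Ω, w_i > 0 for all i}; that is, the optimal value f* of the design problem equals the infimum of the objective over the designs with all weights strictly positive. -/
/-!
For positive weights `M(w)` is positive definite, and a Schur complement argument shows that
`(Kᵀ M(w)⁻¹ K)⁻¹` is the largest `U` with `M(w) - K U Kᵀ ⪰ 0`; as `Ψ` is decreasing,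
`Φ̂(M(w))` is the value of `Ψ` there. Hence `f*` is at most the infimum over interior designs.
Conversely, if `M(w) - K U Kᵀ ⪰ 0` and `v` is an interior design with optimal `U_v`, then
`((1 - ε) w + ε v, (1 - ε) U + ε U_v)` is again feasible, now with an interior design, and
convexity of `Ψ` bounds its value by `(1 - ε) Ψ(U) + ε Ψ(U_v)`; let `ε → 0`.
-/

open Matrix Filter Topology

noncomputable section

attribute [local instance] Matrix.normedAddCommGroup Matrix.normedSpace

/-- Assumption 1: `Ψ` is convex, decreasing, twice continuously differentiable and bounded
below on the set of `k × k` real symmetric positive definite matrices, and `Ψ (X j) → ∞`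
whenever `(X j)` is a bounded sequence of positive definite matrices whose smallest
eigenvalues tend to `0`.  (Over `ℝ`, `Matrix.PosDef` includes symmetry.) -/
structure Assumption1 (k : ℕ) (Ψ : Matrix (Fin k) (Fin k) ℝ → ℝ) : Prop where
  convex : ∀ A B : Matrix (Fin k) (Fin k) ℝ, A.PosDef → B.PosDef →
    ∀ t : ℝ, 0 ≤ t → t ≤ 1 → Ψ (t • A + (1 - t) • B) ≤ t * Ψ A + (1 - t) * Ψ B
  decreasing : ∀ A B : Matrix (Fin k) (Fin k) ℝ, A.IsHermitian → B.PosDef →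
    (A - B).PosSemidef → Ψ A ≤ Ψ B
  smooth : ContDiffOn ℝ 2 Ψ {U : Matrix (Fin k) (Fin k) ℝ | U.PosDef}
  bddBelow : ∃ c : ℝ, ∀ U : Matrix (Fin k) (Fin k) ℝ, U.PosDef → c ≤ Ψ U
  blowup : ∀ (X : ℕ → Matrix (Fin k) (Fin k) ℝ) (hp : ∀ j, (X j).PosDef),
    (∃ C : ℝ, ∀ j i l, |X j i l| ≤ C) →
    Tendsto (fun j => ⨅ i, (hp j).isHermitian.eigenvalues i) atTop (𝓝 0) →
    Tendsto (fun j => Ψ (X j)) atTop atTop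

/-- The simplex of designs. -/
def Omega (n : ℕ) : Set (Fin n → ℝ) := {w | (∀ i, 0 ≤ w i) ∧ ∑ i, w i = 1}

/-- The moment matrix `M(w) = ∑ i, w i • A i`. -/
def Mmat {n m : ℕ} (A : Fin n → Matrix (Fin m) (Fin m) ℝ) (w : Fin n → ℝ) :
    Matrix (Fin m) (Fin m) ℝ := ∑ i, w i • A i

/-- `Range K ⊆ Range X`. -/
def RangeIncl {m k : ℕ} (K : Matrix (Fin m) (Fin k) ℝ) (X : Matrix (Fin m) (Fin m) ℝ) : Prop :=
  LinearMap.range (Matrix.toLin' K) ≤ LinearMap.range (Matrix.toLin' X)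

/-- `Φ̂(X) = inf {Ψ U | U symmetric positive definite, X - K U Kᵀ positive semidefinite}`. -/
def PhiHat {m k : ℕ} (K : Matrix (Fin m) (Fin k) ℝ) (Ψ : Matrix (Fin k) (Fin k) ℝ → ℝ)
    (X : Matrix (Fin m) (Fin m) ℝ) : ℝ :=
  sInf {y | ∃ U : Matrix (Fin k) (Fin k) ℝ, U.PosDef ∧ (X - K * U * Kᵀ).PosSemidef ∧ y = Ψ U}

/-- The optimal value `f*` of the design problem. -/
def fstar {n m k : ℕ} (A : Fin n → Matrix (Fin m) (Fin m) ℝ) (K : Matrix (Fin m) (Fin k) ℝ)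
    (Ψ : Matrix (Fin k) (Fin k) ℝ → ℝ) : ℝ :=
  sInf {y | ∃ w ∈ Omega n, RangeIncl K (Mmat A w) ∧ y = PhiHat K Ψ (Mmat A w)}

/-- `w` is an optimal solution of the design problem. -/
def IsOptimal {n m k : ℕ} (A : Fin n → Matrix (Fin m) (Fin m) ℝ) (K : Matrix (Fin m) (Fin k) ℝ)
    (Ψ : Matrix (Fin k) (Fin k) ℝ → ℝ) (w : Fin n → ℝ) : Prop :=
  w ∈ Omega n ∧ RangeIncl K (Mmat A w) ∧ PhiHat K Ψ (Mmat A w) = fstar A K Ψ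

/-- The open domain `D` of the barrier subproblem. -/
def Dset (n : ℕ) : Set (Fin (n - 1) → ℝ) := {wt | (∀ i, 0 < wt i) ∧ ∑ i, wt i < 1}

/-- `w(w̃) = (w̃₁, …, w̃_{n-1}, 1 - ∑ w̃ᵢ)`. -/
def extendW (n : ℕ) (wt : Fin (n - 1) → ℝ) : Fin n → ℝ :=
  fun i => if h : (i : ℕ) < n - 1 then wt ⟨i, h⟩ else 1 - ∑ j, wt j

/-- The log-barrier function `f_μ`. -/
def fmu {n m k : ℕ} (A : Fin n → Matrix (Fin m) (Fin m) ℝ) (K : Matrix (Fin m) (Fin k) ℝ)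
    (Ψ : Matrix (Fin k) (Fin k) ℝ → ℝ) (μ : ℝ) (wt : Fin (n - 1) → ℝ) : ℝ :=
  Ψ ((Kᵀ * (Mmat A (extendW n wt))⁻¹ * K)⁻¹)
    - μ * ∑ i, Real.log (wt i) - μ * Real.log (1 - ∑ i, wt i)

theorem Matrix.mulVec_injective_of_rank_eq_card {R m n : Type*} [Field R] [Fintype n]
    {K : Matrix m n R} (hK : K.rank = Fintype.card n) : Function.Injective K.mulVec := by
  have h := LinearMap.finrank_range_add_finrank_ker K.mulVecLin
  rw [← Matrix.rank, hK, Module.finrank_fintype_fun_eq_card, add_eq_left,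
    Submodule.finrank_eq_zero, LinearMap.ker_eq_bot] at h
  exact h

theorem Matrix.PosSemidef.add_smul_sub_mul_mul_transpose {m n : Type*} [Fintype n]
    {X₁ X₂ : Matrix m m ℝ} {U₁ U₂ : Matrix n n ℝ} {K : Matrix m n ℝ}
    (h₁ : (X₁ - K * U₁ * Kᵀ).PosSemidef) (h₂ : (X₂ - K * U₂ * Kᵀ).PosSemidef)
    {a b : ℝ} (ha : 0 ≤ a) (hb : 0 ≤ b) :
    (a • X₁ + b • X₂ - K * (a • U₁ + b • U₂) * Kᵀ).PosSemidef := by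
  have e : a • X₁ + b • X₂ - K * (a • U₁ + b • U₂) * Kᵀ =
      a • (X₁ - K * U₁ * Kᵀ) + b • (X₂ - K * U₂ * Kᵀ) := by
    simp only [Matrix.mul_add, Matrix.add_mul, Matrix.mul_smul, Matrix.smul_mul, smul_sub]
    abel
  rw [e]
  exact (h₁.smul ha).add (h₂.smul hb)

/-- The information matrix `(Kᵀ X⁻¹ K)⁻¹`; by `Matrix.PosDef.posSemidef_infoMatrix_sub` it is the
largest feasible `U` in the Loewner order. -/
def infoMatrix {m k : Type*} [Fintype m] [Fintype k] [DecidableEq m] [DecidableEq k]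
    (K : Matrix m k ℝ) (X : Matrix m m ℝ) : Matrix k k ℝ :=
  (Kᵀ * X⁻¹ * K)⁻¹

namespace Matrix

variable {m n : Type*} [Fintype m] [Fintype n] [DecidableEq m]

theorem PosDef.posDef_transpose_mul_inv_mul {X : Matrix m m ℝ} (hX : X.PosDef)
    {K : Matrix m n ℝ} (hK : Function.Injective K.mulVec) : (Kᵀ * X⁻¹ * K).PosDef := by
  simpa using hX.inv.conjTranspose_mul_mul_same hK

variable [DecidableEq n]

/-- Both sides say that the block matrix `[[X, K], [Kᵀ, U⁻¹]]` is positive semidefinite: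
these are its two Schur complements. -/
theorem PosDef.posSemidef_sub_mul_mul_transpose_iff {X : Matrix m m ℝ} {U : Matrix n n ℝ}
    (hX : X.PosDef) (hU : U.PosDef) (K : Matrix m n ℝ) :
    (X - K * U * Kᵀ).PosSemidef ↔ (U⁻¹ - Kᵀ * X⁻¹ * K).PosSemidef := by
  have := hX.isUnit.invertible
  have := hU.isUnit.invertible
  have := hU.inv.isUnit.invertible
  have h₂₂ := PosDef.fromBlocks₂₂ X K hU.inv
  have h₁₁ := PosDef.fromBlocks₁₁ K U⁻¹ hX
  rw [conjTranspose_eq_transpose_of_trivial, inv_inv_of_invertible] at h₂₂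
  rw [conjTranspose_eq_transpose_of_trivial] at h₁₁
  exact h₂₂.symm.trans h₁₁

theorem PosDef.posSemidef_inv_sub_inv {A B : Matrix m m ℝ} (hA : A.PosDef) (hB : B.PosDef)
    (h : (B - A).PosSemidef) : (A⁻¹ - B⁻¹).PosSemidef := by
  simpa using (hB.posSemidef_sub_mul_mul_transpose_iff hA 1).1 (by simpa using h)

/-- Writing `K = M B`, the block matrix `[[M, K], [Kᵀ, Bᵀ M B + 1]]` is
`Nᵀ [[M, 0], [0, 1]] N` with `N = [[1, B], [0, 1]]`, so `U = (Bᵀ M B + 1)⁻¹` works. -/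
theorem PosSemidef.exists_posDef_sub_mul_mul_transpose {M : Matrix m m ℝ} (hM : M.PosSemidef)
    {K B : Matrix m n ℝ} (hB : M * B = K) :
    ∃ U : Matrix n n ℝ, U.PosDef ∧ (M - K * U * Kᵀ).PosSemidef := by
  subst hB
  set D := Bᵀ * M * B + 1
  have hD : D.PosDef := PosDef.posSemidef_add (hM.conjTranspose_mul_mul_same B) PosDef.one
  refine ⟨D⁻¹, hD.inv, ?_⟩
  have := hD.isUnit.invertible
  have : Invertible (1 : Matrix n n ℝ) := invertibleOne
  rw [← conjTranspose_eq_transpose_of_trivial, ← PosDef.fromBlocks₂₂ M _ hD]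
  have hdiag : (fromBlocks M 0 0 (1 : Matrix n n ℝ)).PosSemidef := by
    simpa using (PosDef.fromBlocks₂₂ M (0 : Matrix m n ℝ) PosDef.one).2 (by simpa using hM)
  have e : fromBlocks M (M * B) (M * B)ᴴ D =
      (fromBlocks 1 B 0 1)ᴴ * fromBlocks M 0 0 1 * fromBlocks 1 B 0 1 := by
    have hMt : Mᵀ = M := by simpa using hM.1.eq
    simp [fromBlocks_transpose, fromBlocks_multiply, D, hMt, Matrix.mul_assoc]
  rw [e]
  exact hdiag.conjTranspose_mul_mul_same _

variable {X : Matrix m m ℝ} {K : Matrix m n ℝ}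

theorem PosDef.posDef_infoMatrix (hX : X.PosDef) (hK : Function.Injective K.mulVec) :
    (infoMatrix K X).PosDef :=
  (hX.posDef_transpose_mul_inv_mul hK).inv

theorem PosDef.posSemidef_sub_mul_infoMatrix_mul_transpose (hX : X.PosDef)
    (hK : Function.Injective K.mulVec) : (X - K * infoMatrix K X * Kᵀ).PosSemidef := by
  have hW := hX.posDef_transpose_mul_inv_mul hK
  rw [hX.posSemidef_sub_mul_mul_transpose_iff (hX.posDef_infoMatrix hK), infoMatrix,
    nonsing_inv_nonsing_inv _ ((isUnit_iff_isUnit_det _).1 hW.isUnit), sub_self]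
  exact PosSemidef.zero

theorem PosDef.posSemidef_infoMatrix_sub (hX : X.PosDef) (hK : Function.Injective K.mulVec)
    {U : Matrix n n ℝ} (hU : U.PosDef) (h : (X - K * U * Kᵀ).PosSemidef) :
    (infoMatrix K X - U).PosSemidef := by
  have hW := hX.posDef_transpose_mul_inv_mul hK
  simpa [infoMatrix, nonsing_inv_nonsing_inv _ ((isUnit_iff_isUnit_det _).1 hU.isUnit)] using
    hW.posSemidef_inv_sub_inv hU.inv ((hX.posSemidef_sub_mul_mul_transpose_iff hU K).1 h)

end Matrix

theorem RangeIncl.exists_mul_eq {m k : ℕ} {K : Matrix (Fin m) (Fin k) ℝ}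
    {M : Matrix (Fin m) (Fin m) ℝ} (h : RangeIncl K M) :
    ∃ B : Matrix (Fin m) (Fin k) ℝ, M * B = K := by
  have hcol : ∀ j, ∃ x, M *ᵥ x = K.col j := fun j =>
    h ⟨Pi.single j 1, by rw [Matrix.toLin'_apply, Matrix.mulVec_single_one]⟩
  choose b hb using hcol
  refine ⟨Matrix.of fun i j => b j i, ?_⟩
  ext i j
  simpa [Matrix.mul_apply, Matrix.mulVec, dotProduct] using congrFun (hb j) i

theorem RangeIncl.exists_posDef_sub_mul_mul_transpose {m k : ℕ} {K : Matrix (Fin m) (Fin k) ℝ}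
    {M : Matrix (Fin m) (Fin m) ℝ} (h : RangeIncl K M) (hM : M.PosSemidef) :
    ∃ U : Matrix (Fin k) (Fin k) ℝ, U.PosDef ∧ (M - K * U * Kᵀ).PosSemidef :=
  let ⟨_, hB⟩ := h.exists_mul_eq
  hM.exists_posDef_sub_mul_mul_transpose hB

theorem rangeIncl_of_isUnit {m k : ℕ} (K : Matrix (Fin m) (Fin k) ℝ)
    {M : Matrix (Fin m) (Fin m) ℝ} (hM : IsUnit M) : RangeIncl K M := by
  have hsurj : Function.Surjective (Matrix.toLin' M) := Matrix.mulVec_surjective_iff_isUnit.2 hM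
  rw [RangeIncl, LinearMap.range_eq_top.2 hsurj]
  exact le_top

section Design

variable {n m k : ℕ} {A : Fin n → Matrix (Fin m) (Fin m) ℝ} {K : Matrix (Fin m) (Fin k) ℝ}
  {Ψ : Matrix (Fin k) (Fin k) ℝ → ℝ}

theorem Mmat_add (w v : Fin n → ℝ) : Mmat A (w + v) = Mmat A w + Mmat A v := by
  simp [Mmat, add_smul, Finset.sum_add_distrib]

theorem Mmat_smul (c : ℝ) (w : Fin n → ℝ) : Mmat A (c • w) = c • Mmat A w := by
  simp [Mmat, Finset.smul_sum, smul_smul]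

theorem Mmat_posSemidef (hA : ∀ i, (A i).PosSemidef) {w : Fin n → ℝ} (hw : ∀ i, 0 ≤ w i) :
    (Mmat A w).PosSemidef :=
  Matrix.posSemidef_sum _ fun i _ => (hA i).smul (hw i)

/-- `M(w) = t M(w₀) + M(w - t w₀)` with `t > 0` so small that `w - t w₀ ≥ 0`. -/
theorem Mmat_posDef_of_pos (hA : ∀ i, (A i).PosSemidef) {w₀ w : Fin n → ℝ}
    (h₀ : (Mmat A w₀).PosDef) (hw : ∀ i, 0 < w i) : (Mmat A w).PosDef := by
  have hsmall : ∀ᶠ t in 𝓝[>] (0 : ℝ), ∀ i, t * w₀ i < w i := by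
    refine Filter.eventually_all.2 fun i => nhdsWithin_le_nhds ?_
    have : Tendsto (fun t : ℝ => t * w₀ i) (𝓝 0) (𝓝 0) := by
      simpa using (continuous_mul_const (w₀ i)).tendsto 0
    exact this.eventually (gt_mem_nhds (hw i))
  obtain ⟨t, htw, ht⟩ := (hsmall.and self_mem_nhdsWithin).exists
  rw [show w = t • w₀ + (w - t • w₀) by abel, Mmat_add, Mmat_smul]
  exact (h₀.smul ht).add_posSemidef
    (Mmat_posSemidef hA fun i => by simpa using (htw i).le)

theorem exists_pos_mem_Omega (h : (Omega n).Nonempty) : ∃ v ∈ Omega n, ∀ i, 0 < v i := by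
  obtain ⟨w, hw⟩ := h
  have hn : 0 < n := by
    rcases n with _ | n
    · simp [Omega] at hw
    · omega
  refine ⟨fun _ => (n : ℝ)⁻¹, ⟨fun _ => by positivity, ?_⟩, fun _ => by positivity⟩
  simp [Finset.sum_const, hn.ne']

theorem le_PhiHat {X : Matrix (Fin m) (Fin m) ℝ} {b : ℝ}
    (hne : ∃ U : Matrix (Fin k) (Fin k) ℝ, U.PosDef ∧ (X - K * U * Kᵀ).PosSemidef)
    (h : ∀ U : Matrix (Fin k) (Fin k) ℝ, U.PosDef → (X - K * U * Kᵀ).PosSemidef → b ≤ Ψ U) :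
    b ≤ PhiHat K Ψ X := by
  obtain ⟨U, hU, hfeas⟩ := hne
  refine le_csInf ⟨_, U, hU, hfeas, rfl⟩ ?_
  rintro _ ⟨U, hU, hfeas, rfl⟩
  exact h U hU hfeas

theorem PhiHat_eq_of_posDef
    (hdec : ∀ A B : Matrix (Fin k) (Fin k) ℝ, A.IsHermitian → B.PosDef →
      (A - B).PosSemidef → Ψ A ≤ Ψ B)
    {X : Matrix (Fin m) (Fin m) ℝ} (hX : X.PosDef) (hK : Function.Injective K.mulVec) :
    PhiHat K Ψ X = Ψ (infoMatrix K X) := by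
  have hopt := hX.posDef_infoMatrix hK
  refine IsLeast.csInf_eq ⟨⟨_, hopt, hX.posSemidef_sub_mul_infoMatrix_mul_transpose hK, rfl⟩, ?_⟩
  rintro _ ⟨U, hU, hfeas, rfl⟩
  exact hdec _ _ hopt.1 hU (hX.posSemidef_infoMatrix_sub hK hU hfeas)

variable (A K Ψ) in
def interiorValues : Set ℝ :=
  {y | ∃ w ∈ Omega n, (∀ i, 0 < w i) ∧ y = Ψ (infoMatrix K (Mmat A w))}

/-- Moving a feasible pair `(w, U)` a fraction `ε` towards the interior design `v`, the pair
stays feasible by convexity of the constraint, and convexity of `Ψ` bounds the new value. -/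
theorem exists_mem_interiorValues_le (hA : ∀ i, (A i).PosSemidef)
    (hK : Function.Injective K.mulVec)
    (hconv : ∀ A B : Matrix (Fin k) (Fin k) ℝ, A.PosDef → B.PosDef →
      ∀ t : ℝ, 0 ≤ t → t ≤ 1 → Ψ (t • A + (1 - t) • B) ≤ t * Ψ A + (1 - t) * Ψ B)
    (hdec : ∀ A B : Matrix (Fin k) (Fin k) ℝ, A.IsHermitian → B.PosDef →
      (A - B).PosSemidef → Ψ A ≤ Ψ B)
    {v : Fin n → ℝ} (hv : v ∈ Omega n) (hvpos : ∀ i, 0 < v i) (hMv : (Mmat A v).PosDef)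
    {w : Fin n → ℝ} (hw : w ∈ Omega n) {U : Matrix (Fin k) (Fin k) ℝ} (hU : U.PosDef)
    (hfeas : (Mmat A w - K * U * Kᵀ).PosSemidef) {ε : ℝ} (hε₀ : 0 < ε) (hε₁ : ε < 1) :
    ∃ y ∈ interiorValues A K Ψ, y ≤ (1 - ε) * Ψ U + ε * Ψ (infoMatrix K (Mmat A v)) := by
  set V := infoMatrix K (Mmat A v)
  have hV : V.PosDef := hMv.posDef_infoMatrix hK
  set wε := (1 - ε) • w + ε • v
  have hwε : ∀ i, 0 < wε i := fun i =>
    add_pos_of_nonneg_of_pos (mul_nonneg (by linarith) (hw.1 i)) (mul_pos hε₀ (hvpos i))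
  have hMε : (Mmat A wε).PosDef := Mmat_posDef_of_pos hA hMv hwε
  have hUε : ((1 - ε) • U + ε • V).PosDef := (hU.smul (by linarith)).add (hV.smul hε₀)
  have hfeasε : (Mmat A wε - K * ((1 - ε) • U + ε • V) * Kᵀ).PosSemidef := by
    rw [Mmat_add, Mmat_smul, Mmat_smul]
    exact hfeas.add_smul_sub_mul_mul_transpose
      (hMv.posSemidef_sub_mul_infoMatrix_mul_transpose hK) (by linarith) hε₀.le
  have hwεΩ : wε ∈ Omega n := convex_stdSimplex ℝ (Fin n) hw hv (by linarith) hε₀.le (by ring)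
  refine ⟨_, ⟨wε, hwεΩ, hwε, rfl⟩, ?_⟩
  calc Ψ (infoMatrix K (Mmat A wε)) ≤ Ψ ((1 - ε) • U + ε • V) :=
        hdec _ _ (hMε.posDef_infoMatrix hK).1 hUε (hMε.posSemidef_infoMatrix_sub hK hUε hfeasε)
    _ ≤ (1 - ε) * Ψ U + ε * Ψ V := by
        simpa using hconv U V hU hV (1 - ε) (by linarith) (by linarith)

theorem sInf_interiorValues_le (hA : ∀ i, (A i).PosSemidef)
    (hK : Function.Injective K.mulVec)
    (hconv : ∀ A B : Matrix (Fin k) (Fin k) ℝ, A.PosDef → B.PosDef →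
      ∀ t : ℝ, 0 ≤ t → t ≤ 1 → Ψ (t • A + (1 - t) • B) ≤ t * Ψ A + (1 - t) * Ψ B)
    (hdec : ∀ A B : Matrix (Fin k) (Fin k) ℝ, A.IsHermitian → B.PosDef →
      (A - B).PosSemidef → Ψ A ≤ Ψ B)
    (hbdd : BddBelow (interiorValues A K Ψ))
    {v : Fin n → ℝ} (hv : v ∈ Omega n) (hvpos : ∀ i, 0 < v i) (hMv : (Mmat A v).PosDef)
    {w : Fin n → ℝ} (hw : w ∈ Omega n) {U : Matrix (Fin k) (Fin k) ℝ} (hU : U.PosDef)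
    (hfeas : (Mmat A w - K * U * Kᵀ).PosSemidef) :
    sInf (interiorValues A K Ψ) ≤ Ψ U := by
  set f := fun ε : ℝ => (1 - ε) * Ψ U + ε * Ψ (infoMatrix K (Mmat A v))
  have hlim : Tendsto f (𝓝[>] 0) (𝓝 (Ψ U)) :=
    ((by fun_prop : Continuous f).tendsto' 0 _ (by simp [f])).mono_left nhdsWithin_le_nhds
  refine ge_of_tendsto hlim ?_
  filter_upwards [Ioo_mem_nhdsGT one_pos] with ε ⟨hε₀, hε₁⟩
  obtain ⟨y, hy, hle⟩ := exists_mem_interiorValues_le hA hK hconv hdec hv hvpos hMv hw hU hfeas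
    hε₀ hε₁
  exact (csInf_le hbdd hy).trans hle

end Design

theorem fstar_eq_inf_positive_general (n m k : ℕ)
    (A : Fin n → Matrix (Fin m) (Fin m) ℝ) (hA : ∀ i, (A i).PosSemidef)
    (hex : ∃ w ∈ Omega n, (Mmat A w).PosDef)
    (K : Matrix (Fin m) (Fin k) ℝ) (hK : K.rank = k)
    (Ψ : Matrix (Fin k) (Fin k) ℝ → ℝ)
    (hconv : ∀ A B : Matrix (Fin k) (Fin k) ℝ, A.PosDef → B.PosDef →
      ∀ t : ℝ, 0 ≤ t → t ≤ 1 → Ψ (t • A + (1 - t) • B) ≤ t * Ψ A + (1 - t) * Ψ B)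
    (hdec : ∀ A B : Matrix (Fin k) (Fin k) ℝ, A.IsHermitian → B.PosDef →
      (A - B).PosSemidef → Ψ A ≤ Ψ B)
    (hbdd : ∃ c : ℝ, ∀ U : Matrix (Fin k) (Fin k) ℝ, U.PosDef → c ≤ Ψ U) :
    fstar A K Ψ =
      sInf {y | ∃ w ∈ Omega n, (∀ i, 0 < w i) ∧ y = Ψ ((Kᵀ * (Mmat A w)⁻¹ * K)⁻¹)} := by
  obtain ⟨c, hc⟩ := hbdd
  obtain ⟨w₀, hw₀, hM₀⟩ := hex
  obtain ⟨v, hv, hvpos⟩ := exists_pos_mem_Omega ⟨w₀, hw₀⟩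
  have hK' : Function.Injective K.mulVec :=
    Matrix.mulVec_injective_of_rank_eq_card (by rw [hK, Fintype.card_fin])
  have hpd : ∀ w : Fin n → ℝ, (∀ i, 0 < w i) → (Mmat A w).PosDef :=
    fun _ hw => Mmat_posDef_of_pos hA hM₀ hw
  have hI : BddBelow (interiorValues A K Ψ) :=
    ⟨c, by rintro _ ⟨w, -, hw, rfl⟩; exact hc _ ((hpd w hw).posDef_infoMatrix hK')⟩
  unfold fstar
  apply le_antisymm
  · refine le_csInf ⟨_, v, hv, hvpos, rfl⟩ ?_
    rintro _ ⟨w, hw, hwpos, rfl⟩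
    refine csInf_le ⟨c, ?_⟩ ⟨w, hw, rangeIncl_of_isUnit K (hpd w hwpos).isUnit,
      (PhiHat_eq_of_posDef hdec (hpd w hwpos) hK').symm⟩
    rintro _ ⟨w, hw, hr, rfl⟩
    exact le_PhiHat (hr.exists_posDef_sub_mul_mul_transpose (Mmat_posSemidef hA hw.1))
      fun U hU _ => hc U hU
  · refine le_csInf ⟨_, v, hv, rangeIncl_of_isUnit K (hpd v hvpos).isUnit, rfl⟩ ?_
    rintro _ ⟨w, hw, hr, rfl⟩
    exact le_PhiHat (hr.exists_posDef_sub_mul_mul_transpose (Mmat_posSemidef hA hw.1))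
      fun U hU hUw => sInf_interiorValues_le hA hK' hconv hdec hI hv hvpos (hpd v hvpos) hw hU hUw

/-- The optimal value of the design problem equals the infimum of the objective over
designs with all weights strictly positive. -/
theorem fstar_eq_inf_positive (n m k : ℕ) (hn : 2 ≤ n) (hm : 1 ≤ m) (hk : 1 ≤ k) (hkm : k ≤ m)
    (A : Fin n → Matrix (Fin m) (Fin m) ℝ) (hA : ∀ i, (A i).PosSemidef)
    (hex : ∃ w ∈ Omega n, (Mmat A w).PosDef)
    (K : Matrix (Fin m) (Fin k) ℝ) (hK : K.rank = k)
    (Ψ : Matrix (Fin k) (Fin k) ℝ → ℝ)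
    (hconv : ∀ A B : Matrix (Fin k) (Fin k) ℝ, A.PosDef → B.PosDef →
      ∀ t : ℝ, 0 ≤ t → t ≤ 1 → Ψ (t • A + (1 - t) • B) ≤ t * Ψ A + (1 - t) * Ψ B)
    (hdec : ∀ A B : Matrix (Fin k) (Fin k) ℝ, A.IsHermitian → B.PosDef →
      (A - B).PosSemidef → Ψ A ≤ Ψ B)
    (hbdd : ∃ c : ℝ, ∀ U : Matrix (Fin k) (Fin k) ℝ, U.PosDef → c ≤ Ψ U) :
    fstar A K Ψ =
      sInf {y | ∃ w ∈ Omega n, (∀ i, 0 < w i) ∧ y = Ψ ((Kᵀ * (Mmat A w)⁻¹ * K)⁻¹)} :=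
  fstar_eq_inf_positive_general n m k A hA hex K hK Ψ hconv hdec hbdd
end
end

section
/- Suppose Ψ satisfies Assumption 1. Then the design problem attains its infimum: there exists w* ∈ Ω with Range(K) ⊆ Range(M(w*)) such that Φ̂(M(w*)) = f*. -/
open Matrix Filter Topology

noncomputable section

attribute [local instance] Matrix.normedAddCommGroup Matrix.normedSpace

/-!
Take a minimising sequence of pairs `(wⱼ, Uⱼ)` with `Uⱼ ≻ 0`, `K Uⱼ Kᵀ ⪯ M(wⱼ)` and
`Ψ(Uⱼ) → f*`. Since `K` has a left inverse `L`, `Uⱼ ⪯ L M(wⱼ) Lᵀ`, so the pairs stay in a compact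
set and a subsequence converges to some `(w*, U*)` with `K U* Kᵀ ⪯ M(w*)`. If `U*` were singular,
the smallest eigenvalues of the `Uⱼ` would tend to `0` along the subsequence and `Ψ(Uⱼ)` would blow
up; so `U* ≻ 0`, continuity of `Ψ` gives `Ψ(U*) ≤ f*`, and `K U* Kᵀ ⪯ M(w*)` with `U* ≻ 0` forces
`Range K ⊆ Range M(w*)`. Hence `Φ̂(M(w*)) ≤ Ψ(U*) ≤ f*`.
-/

namespace Matrix

open scoped MatrixOrder

variable {ι κ : Type*} [Fintype ι] [Fintype κ]

-- `Matrix` is a type synonym, so the instance for `ι → κ → R` is not found by itself.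
instance instFirstCountableTopology {R : Type*} [Countable ι] [Countable κ] [TopologicalSpace R]
    [FirstCountableTopology R] : FirstCountableTopology (Matrix ι κ R) :=
  inferInstanceAs (FirstCountableTopology (ι → κ → R))

lemma isClosed_setOf_posSemidef : IsClosed {U : Matrix ι ι ℝ | U.PosSemidef} := by
  simp only [posSemidef_iff_dotProduct_mulVec, Set.ofPred_and, Set.ofPred_forall]
  refine .inter (isClosed_eq continuous_id.matrix_conjTranspose continuous_id) ?_
  exact isClosed_iInter fun x => isClosed_le continuous_const
    (continuous_const.dotProduct (continuous_id.matrix_mulVec continuous_const))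

lemma PosSemidef.abs_apply_le_trace [DecidableEq ι] {U : Matrix ι ι ℝ} (hU : U.PosSemidef)
    (i j : ι) : |U i j| ≤ U.trace := by
  have hquad (s : ℝ) : 0 ≤ U i i + s * U i j + s * U j i + s ^ 2 * U j j := by
    have := hU.dotProduct_mulVec_nonneg (Pi.single i 1 + Pi.single j s)
    simp [mulVec_add, dotProduct_add, add_dotProduct, mulVec_single, single_dotProduct] at this
    linear_combination this
  have hsymm : U j i = U i j := hU.1.apply i j
  have hdiag (l : ι) : U l l ≤ U.trace :=
    Finset.single_le_sum (f := U.diag) (fun l _ => hU.diag_nonneg) (Finset.mem_univ l)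
  have := hquad 1
  have := hquad (-1)
  rw [abs_le]; constructor <;> nlinarith [hdiag i, hdiag j]

section Eigenvalues

variable [DecidableEq ι] {U : Matrix ι ι ℝ}

lemma IsHermitian.posSemidef_sub_smul_one (hU : U.IsHermitian) {δ : ℝ}
    (h : ∀ i, δ ≤ hU.eigenvalues i) : (U - δ • 1).PosSemidef := by
  have := (algebraMap_le_iff_le_spectrum (r := δ) (a := U) hU.isSelfAdjoint).2 <| by
    rw [hU.spectrum_real_eq_range_eigenvalues]; rintro _ ⟨i, rfl⟩; exact h i
  rwa [Algebra.algebraMap_eq_smul_one] at this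

lemma IsHermitian.posSemidef_smul_one_sub (hU : U.IsHermitian) {c : ℝ}
    (h : ∀ i, hU.eigenvalues i ≤ c) : (c • 1 - U).PosSemidef := by
  have := (le_algebraMap_iff_spectrum_le (r := c) (a := U) hU.isSelfAdjoint).2 <| by
    rw [hU.spectrum_real_eq_range_eigenvalues]; rintro _ ⟨i, rfl⟩; exact h i
  rwa [Algebra.algebraMap_eq_smul_one] at this

lemma IsHermitian.iInf_eigenvalues_mul_dotProduct_le (hU : U.IsHermitian) (x : ι → ℝ) :
    (⨅ i, hU.eigenvalues i) * (x ⬝ᵥ x) ≤ x ⬝ᵥ U *ᵥ x := by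
  have h := (IsHermitian.posSemidef_sub_smul_one hU fun i =>
    ciInf_le (Finite.bddBelow_range _) i).dotProduct_mulVec_nonneg x
  simpa [sub_mulVec, smul_mulVec, dotProduct_smul] using h

end Eigenvalues

lemma exists_mul_eq_one_of_rank_eq [DecidableEq ι] [DecidableEq κ] {F : Type*} [Field F]
    {K : Matrix ι κ F} (hK : K.rank = Fintype.card κ) : ∃ L : Matrix κ ι F, L * K = 1 := by
  have hker : LinearMap.ker K.mulVecLin = ⊥ := by
    have := LinearMap.finrank_range_add_finrank_ker K.mulVecLin
    rw [← rank, hK, Module.finrank_fintype_fun_eq_card] at this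
    exact Submodule.finrank_eq_zero.mp (by omega)
  obtain ⟨g, hg⟩ := K.mulVecLin.exists_leftInverse_of_injective hker
  refine ⟨LinearMap.toMatrix' g, ?_⟩
  calc LinearMap.toMatrix' g * K = LinearMap.toMatrix' (g ∘ₗ toLin' K) := by
        rw [LinearMap.toMatrix'_comp, LinearMap.toMatrix'_toLin']
    _ = 1 := by rw [toLin'_apply', hg, LinearMap.toMatrix'_id]

lemma exists_eq_mul_of_range_le [DecidableEq ι] [DecidableEq κ] {R : Type*} [CommRing R]
    {M : Matrix ι ι R} {K : Matrix ι κ R}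
    (h : LinearMap.range (toLin' K) ≤ LinearMap.range (toLin' M)) : ∃ B, K = M * B := by
  have hcol (j : κ) : ∃ b, M *ᵥ b = K *ᵥ Pi.single j 1 := h ⟨Pi.single j 1, rfl⟩
  choose b hb using hcol
  refine ⟨(of b)ᵀ, ext fun i j => ?_⟩
  have := congrFun (hb j) i
  rw [mulVec_single_one] at this
  exact this.symm

/-- For Hermitian `M`, `Range M = (Ker M)ᗮ`; and `Range K = (Ker Kᴴ)ᗮ`. -/
lemma range_toLin'_le_of_ker_le [DecidableEq ι] [DecidableEq κ] {𝕜 : Type*} [RCLike 𝕜]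
    {M : Matrix ι ι 𝕜} (hM : M.IsHermitian) (K : Matrix ι κ 𝕜)
    (h : ∀ x, M *ᵥ x = 0 → Kᴴ *ᵥ x = 0) :
    LinearMap.range (toLin' K) ≤ LinearMap.range (toLin' M) := by
  have hE : LinearMap.range (toEuclideanLin K) ≤ LinearMap.range (toEuclideanLin M) := by
    rw [← Submodule.orthogonal_orthogonal (LinearMap.range (toEuclideanLin M)),
      (isSymmetric_toEuclideanLin_iff.2 hM).orthogonal_range,
      ← LinearMap.adjoint_adjoint (toEuclideanLin K), ← LinearMap.orthogonal_ker,
      ← toEuclideanLin_conjTranspose_eq_adjoint]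
    refine Submodule.orthogonal_le fun x hx => ?_
    simp only [LinearMap.mem_ker, toLpLin_apply, WithLp.toLp_eq_zero] at hx ⊢
    exact h _ hx
  rintro _ ⟨z, rfl⟩
  obtain ⟨x, hx⟩ := hE ⟨WithLp.toLp 2 z, rfl⟩
  exact ⟨WithLp.ofLp x, congrArg WithLp.ofLp hx⟩

/-- With `S = √M`, `(M B)(M B)ᵀ = S N S` where `N = (S B)(S B)ᵀ ⪯ c • 1`, hence `⪯ c • M`. -/
lemma exists_posSemidef_sub_smul_mul_transpose [DecidableEq ι] {M : Matrix ι ι ℝ}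
    (hM : M.PosSemidef) (B : Matrix ι κ ℝ) :
    ∃ ε : ℝ, 0 < ε ∧ (M - ε • (M * B * (M * B)ᵀ)).PosSemidef := by
  set S := CFC.sqrt M
  have hSS : S * S = M := CFC.sqrt_mul_sqrt_self M hM.nonneg
  have hS : Sᵀ = S := by simpa using (CFC.sqrt_nonneg M).posSemidef.isHermitian.eq
  set N := S * B * (S * B)ᵀ
  have hN : N.IsHermitian := by simpa [N] using isHermitian_mul_conjTranspose_self (S * B)
  obtain ⟨c, hc⟩ := Finite.bddAbove_range hN.eigenvalues
  have hc1 : (0 : ℝ) < max c 1 := lt_max_of_lt_right one_pos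
  have hle : N ≤ max c 1 • 1 := hN.posSemidef_smul_one_sub fun i =>
    (hc ⟨i, rfl⟩).trans (le_max_left c 1)
  have hSNS : S * N * S = M * B * (M * B)ᵀ := by
    rw [← hSS]; simp only [N, transpose_mul, hS, Matrix.mul_assoc]
  have hS1S : S * (max c 1 • 1) * S = max c 1 • M := by
    rw [Matrix.mul_smul, Matrix.mul_one, Matrix.smul_mul, hSS]
  have key : M * B * (M * B)ᵀ ≤ max c 1 • M :=
    hSNS ▸ hS1S ▸ conjugate_le_conjugate_of_nonneg hle (CFC.sqrt_nonneg M)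
  refine ⟨(max c 1)⁻¹, inv_pos.2 hc1, ?_⟩
  have := (le_iff.1 key).smul (inv_nonneg.2 hc1.le)
  rwa [smul_sub, smul_smul, inv_mul_cancel₀ hc1.ne', one_smul] at this

end Matrix

lemma isCompact_Omega (n : ℕ) : IsCompact (Omega n) := isCompact_stdSimplex ℝ (Fin n)

lemma continuous_Mmat {n m : ℕ} (A : Fin n → Matrix (Fin m) (Fin m) ℝ) : Continuous (Mmat A) :=
  continuous_finsetSum _ fun i _ => (continuous_apply i).smul continuous_const

lemma posSemidef_Mmat {n m : ℕ} {A : Fin n → Matrix (Fin m) (Fin m) ℝ}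
    (hA : ∀ i, (A i).PosSemidef) {w : Fin n → ℝ} (hw : w ∈ Omega n) : (Mmat A w).PosSemidef :=
  posSemidef_sum _ fun i _ => (hA i).smul (hw.1 i)

section RangeIncl

variable {m k : ℕ} {K : Matrix (Fin m) (Fin k) ℝ} {M : Matrix (Fin m) (Fin m) ℝ}

lemma rangeIncl_of_ker_le (hM : M.IsHermitian) (h : ∀ x, M *ᵥ x = 0 → Kᵀ *ᵥ x = 0) :
    RangeIncl K M :=
  range_toLin'_le_of_ker_le hM K (by simpa using h)

variable (K) in
lemma rangeIncl_of_posDef (hM : M.PosDef) : RangeIncl K M :=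
  rangeIncl_of_ker_le hM.isHermitian fun x hx => by
    obtain rfl : x = 0 := by
      by_contra hx0
      simpa [hx] using hM.dotProduct_mulVec_pos hx0
    exact mulVec_zero _

lemma rangeIncl_of_posSemidef_sub {U : Matrix (Fin k) (Fin k) ℝ} (hU : U.PosDef)
    (h : (M - K * U * Kᵀ).PosSemidef) : RangeIncl K M := by
  have hKUK : (K * U * Kᵀ).IsHermitian := by
    simpa using hU.posSemidef.mul_mul_conjTranspose_same K |>.isHermitian
  refine rangeIncl_of_ker_le (by simpa using h.1.add hKUK) fun x hx => ?_
  by_contra hKx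
  have h1 := h.dotProduct_mulVec_nonneg x
  have h2 := hU.dotProduct_mulVec_pos hKx
  simp only [star_trivial, sub_mulVec, dotProduct_sub, hx, dotProduct_zero, ← mulVec_mulVec,
    dotProduct_mulVec _ K, ← mulVec_transpose] at h1 h2
  linarith

lemma exists_feasible_of_rangeIncl (hM : M.PosSemidef) (hr : RangeIncl K M) :
    ∃ U : Matrix (Fin k) (Fin k) ℝ, U.PosDef ∧ (M - K * U * Kᵀ).PosSemidef := by
  obtain ⟨B, rfl⟩ := exists_eq_mul_of_range_le hr
  obtain ⟨ε, hε, h⟩ := exists_posSemidef_sub_smul_mul_transpose hM B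
  refine ⟨ε • 1, PosDef.one.smul hε, ?_⟩
  rwa [Matrix.mul_smul, Matrix.mul_one, Matrix.smul_mul]

end RangeIncl

section PhiHat

variable {m k : ℕ} {K : Matrix (Fin m) (Fin k) ℝ} {Ψ : Matrix (Fin k) (Fin k) ℝ → ℝ}
  {X : Matrix (Fin m) (Fin m) ℝ}

lemma phiHat_le (hΨ : ∃ c, ∀ U, U.PosDef → c ≤ Ψ U) {U : Matrix (Fin k) (Fin k) ℝ}
    (hU : U.PosDef) (hX : (X - K * U * Kᵀ).PosSemidef) : PhiHat K Ψ X ≤ Ψ U :=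
  let ⟨c, hc⟩ := hΨ
  csInf_le (by exact ⟨c, by rintro _ ⟨V, hV, -, rfl⟩; exact hc V hV⟩) ⟨U, hU, hX, rfl⟩

lemma le_phiHat {c : ℝ} (hc : ∀ U, U.PosDef → c ≤ Ψ U)
    (hX : ∃ U : Matrix (Fin k) (Fin k) ℝ, U.PosDef ∧ (X - K * U * Kᵀ).PosSemidef) :
    c ≤ PhiHat K Ψ X :=
  let ⟨U, hU, hXU⟩ := hX
  le_csInf (by exact ⟨Ψ U, U, hU, hXU, rfl⟩) <| by rintro _ ⟨V, hV, -, rfl⟩; exact hc V hV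

lemma exists_lt_of_phiHat_lt
    (hX : ∃ U : Matrix (Fin k) (Fin k) ℝ, U.PosDef ∧ (X - K * U * Kᵀ).PosSemidef) {a : ℝ}
    (h : PhiHat K Ψ X < a) :
    ∃ U : Matrix (Fin k) (Fin k) ℝ, U.PosDef ∧ (X - K * U * Kᵀ).PosSemidef ∧ Ψ U < a := by
  obtain ⟨U, hU, hXU⟩ := hX
  obtain ⟨_, ⟨V, hV, hXV, rfl⟩, hVa⟩ :=
    exists_lt_of_csInf_lt (by exact ⟨Ψ U, U, hU, hXU, rfl⟩) h
  exact ⟨V, hV, hXV, hVa⟩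

end PhiHat

/-- The design problem recast jointly in `(w, U)`: `f*` is the infimum of `Ψ U` over these pairs
with `U ≻ 0`. -/
def feasiblePairs {n m k : ℕ} (A : Fin n → Matrix (Fin m) (Fin m) ℝ)
    (K : Matrix (Fin m) (Fin k) ℝ) : Set ((Fin n → ℝ) × Matrix (Fin k) (Fin k) ℝ) :=
  {p | p.1 ∈ Omega n ∧ p.2.PosSemidef ∧ (Mmat A p.1 - K * p.2 * Kᵀ).PosSemidef}

section Fstar

variable {n m k : ℕ} {A : Fin n → Matrix (Fin m) (Fin m) ℝ} {K : Matrix (Fin m) (Fin k) ℝ}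
  {Ψ : Matrix (Fin k) (Fin k) ℝ → ℝ}

lemma fstar_le_phiHat (hA : ∀ i, (A i).PosSemidef) (hΨ : ∃ c, ∀ U, U.PosDef → c ≤ Ψ U)
    {w : Fin n → ℝ} (hw : w ∈ Omega n) (hr : RangeIncl K (Mmat A w)) :
    fstar A K Ψ ≤ PhiHat K Ψ (Mmat A w) := by
  obtain ⟨c, hc⟩ := hΨ
  refine csInf_le ?_ ⟨w, hw, hr, rfl⟩
  refine ⟨c, ?_⟩
  rintro _ ⟨v, hv, hvr, rfl⟩
  exact le_phiHat hc (exists_feasible_of_rangeIncl (posSemidef_Mmat hA hv) hvr)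

lemma exists_mem_feasiblePairs_lt (hA : ∀ i, (A i).PosSemidef)
    (hex : ∃ w ∈ Omega n, (Mmat A w).PosDef) {a : ℝ} (h : fstar A K Ψ < a) :
    ∃ p ∈ feasiblePairs A K, p.2.PosDef ∧ Ψ p.2 < a := by
  obtain ⟨w₀, hw₀, hpd⟩ := hex
  obtain ⟨_, ⟨w, hw, hr, rfl⟩, hwa⟩ :=
    exists_lt_of_csInf_lt (by exact ⟨_, w₀, hw₀, rangeIncl_of_posDef K hpd, rfl⟩) h
  obtain ⟨U, hU, hwU, hUa⟩ :=
    exists_lt_of_phiHat_lt (exists_feasible_of_rangeIncl (posSemidef_Mmat hA hw) hr) hwa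
  exact ⟨(w, U), ⟨hw, hU.posSemidef, hwU⟩, hU, hUa⟩

variable (A) in
lemma isCompact_feasiblePairs (hK : K.rank = k) : IsCompact (feasiblePairs A K) := by
  obtain ⟨L, hL⟩ := exists_mul_eq_one_of_rank_eq (K := K) (by simpa using hK)
  obtain ⟨C, hC⟩ := (isCompact_Omega n).bddAbove_image (f := fun w => (L * Mmat A w * Lᵀ).trace)
    ((continuous_const.matrix_mul (continuous_Mmat A)).matrix_mul
      continuous_const).matrix_trace.continuousOn
  have hclosed : IsClosed (feasiblePairs A K) :=
    ((isCompact_Omega n).isClosed.preimage continuous_fst).inter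
      ((isClosed_setOf_posSemidef.preimage continuous_snd).inter
        (isClosed_setOf_posSemidef.preimage (((continuous_Mmat A).comp continuous_fst).sub
          ((continuous_const.matrix_mul continuous_snd).matrix_mul continuous_const))))
  refine ((isCompact_Omega n).prod (isCompact_closedBall 0 C)).of_isClosed_subset hclosed ?_
  rintro ⟨w, U⟩ ⟨hw, hU, hwU⟩
  have hUL : (L * Mmat A w * Lᵀ - U).PosSemidef := by
    have hLK : L * (K * U * Kᵀ) * Lᵀ = U := by
      simp only [← Matrix.mul_assoc]
      rw [hL, Matrix.one_mul, Matrix.mul_assoc, ← transpose_mul, hL, transpose_one, Matrix.mul_one]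
    simpa [Matrix.mul_sub, Matrix.sub_mul, hLK] using hwU.mul_mul_conjTranspose_same L
  have htr : U.trace ≤ C := by
    have := hUL.trace_nonneg
    rw [trace_sub] at this
    linarith [hC ⟨w, hw, rfl⟩]
  exact ⟨hw, mem_closedBall_zero_iff.2 <| (norm_le_iff (hU.trace_nonneg.trans htr)).2
    fun i j => (hU.abs_apply_le_trace i j).trans htr⟩

end Fstar

lemma Assumption1.posDef_of_tendsto {k : ℕ} {Ψ : Matrix (Fin k) (Fin k) ℝ → ℝ}
    (hΨ : Assumption1 k Ψ) {U : ℕ → Matrix (Fin k) (Fin k) ℝ} {U₀ : Matrix (Fin k) (Fin k) ℝ}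
    (hU : ∀ j, (U j).PosDef) (hlim : Tendsto U atTop (𝓝 U₀))
    (hbdd : BddAbove (Set.range fun j => Ψ (U j))) : U₀.PosDef := by
  have hU₀ : U₀.PosSemidef :=
    isClosed_setOf_posSemidef.mem_of_tendsto hlim (.of_forall fun j => (hU j).posSemidef)
  by_contra hnot
  obtain ⟨x, hx0, hx⟩ : ∃ x ≠ 0, x ⬝ᵥ U₀ *ᵥ x = 0 := by
    by_contra! h
    exact hnot <| PosDef.of_dotProduct_mulVec_pos hU₀.1 fun x hx => by
      simpa using (hU₀.dotProduct_mulVec_nonneg x).lt_of_ne' (by simpa using h x hx)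
  have hxx : 0 < x ⬝ᵥ x := by simpa using dotProduct_star_self_pos_iff.2 hx0
  have hray : Tendsto (fun j => x ⬝ᵥ U j *ᵥ x / (x ⬝ᵥ x)) atTop (𝓝 0) := by
    have hcont : Continuous fun V : Matrix (Fin k) (Fin k) ℝ => x ⬝ᵥ V *ᵥ x :=
      continuous_const.dotProduct (continuous_id.matrix_mulVec continuous_const)
    simpa [hx] using ((hcont.tendsto U₀).comp hlim).div_const (x ⬝ᵥ x)
  have hmin : Tendsto (fun j => ⨅ i, (hU j).isHermitian.eigenvalues i) atTop (𝓝 0) :=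
    tendsto_of_tendsto_of_tendsto_of_le_of_le tendsto_const_nhds hray
      (fun j => Real.iInf_nonneg fun i => ((hU j).eigenvalues_pos i).le)
      (fun j => (le_div_iff₀ hxx).2 ((hU j).isHermitian.iInf_eigenvalues_mul_dotProduct_le x))
  obtain ⟨C, hC⟩ := isBounded_iff_forall_norm_le.1 (Metric.isBounded_range_of_tendsto U hlim)
  have hentries : ∃ C, ∀ j i l, |U j i l| ≤ C :=
    ⟨C, fun j i l => (norm_entry_le_entrywise_sup_norm (U j)).trans (hC _ ⟨j, rfl⟩)⟩
  exact not_bddAbove_of_tendsto_atTop (hΨ.blowup U hU hentries hmin) hbdd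

theorem design_problem_attained_general (n m k : ℕ)
    (A : Fin n → Matrix (Fin m) (Fin m) ℝ) (hA : ∀ i, (A i).PosSemidef)
    (hex : ∃ w ∈ Omega n, (Mmat A w).PosDef)
    (K : Matrix (Fin m) (Fin k) ℝ) (hK : K.rank = k)
    (Ψ : Matrix (Fin k) (Fin k) ℝ → ℝ)
    (hΨ : Assumption1 k Ψ) :
    ∃ wstar : Fin n → ℝ, wstar ∈ Omega n ∧ RangeIncl K (Mmat A wstar) ∧
      PhiHat K Ψ (Mmat A wstar) = fstar A K Ψ := by
  have hseq (j : ℕ) :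
      ∃ p ∈ feasiblePairs A K, p.2.PosDef ∧ Ψ p.2 < fstar A K Ψ + 1 / ((j : ℝ) + 1) :=
    exists_mem_feasiblePairs_lt hA hex (lt_add_of_pos_right _ Nat.one_div_pos_of_nat)
  choose p hpF hpPD hpΨ using hseq
  obtain ⟨⟨wstar, Ustar⟩, ⟨hw, -, hfeas⟩, φ, hφ, hlim⟩ :=
    (isCompact_feasiblePairs A hK).tendsto_subseq hpF
  have hUlim : Tendsto (fun j => (p (φ j)).2) atTop (𝓝 Ustar) :=
    (continuous_snd.tendsto _).comp hlim
  have hbound : Tendsto (fun j => fstar A K Ψ + 1 / ((φ j : ℝ) + 1)) atTop (𝓝 (fstar A K Ψ)) := by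
    simpa using (tendsto_const_nhds (x := fstar A K Ψ)).add
      (tendsto_one_div_add_atTop_nhds_zero_nat.comp hφ.tendsto_atTop)
  have hUstar : Ustar.PosDef := hΨ.posDef_of_tendsto (fun j => hpPD _) hUlim
    (hbound.bddAbove_range.range_mono _ fun j => (hpΨ _).le)
  have hΨle : Ψ Ustar ≤ fstar A K Ψ :=
    le_of_tendsto_of_tendsto' ((hΨ.smooth.continuousOn.continuousWithinAt hUstar).tendsto.comp
      (tendsto_nhdsWithin_iff.2 ⟨hUlim, .of_forall fun j => hpPD _⟩)) hbound fun j => (hpΨ _).le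
  have hr : RangeIncl K (Mmat A wstar) := rangeIncl_of_posSemidef_sub hUstar hfeas
  exact ⟨wstar, hw, hr, le_antisymm ((phiHat_le hΨ.bddBelow hUstar hfeas).trans hΨle)
    (fstar_le_phiHat hA hΨ.bddBelow hw hr)⟩

/-- Under Assumption 1 the design problem attains its infimum. -/
theorem design_problem_attained (n m k : ℕ) (hn : 2 ≤ n) (hm : 1 ≤ m) (hk : 1 ≤ k) (hkm : k ≤ m)
    (A : Fin n → Matrix (Fin m) (Fin m) ℝ) (hA : ∀ i, (A i).PosSemidef)
    (hex : ∃ w ∈ Omega n, (Mmat A w).PosDef)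
    (K : Matrix (Fin m) (Fin k) ℝ) (hK : K.rank = k)
    (Ψ : Matrix (Fin k) (Fin k) ℝ → ℝ)
    (hΨ : Assumption1 k Ψ) :
    ∃ wstar : Fin n → ℝ, wstar ∈ Omega n ∧ RangeIncl K (Mmat A wstar) ∧
      PhiHat K Ψ (Mmat A wstar) = fstar A K Ψ :=
  design_problem_attained_general n m k A hA hex K hK Ψ hΨ
end
end

section
/- Suppose Ψ satisfies Assumption 1. Let C > 0, let (w*, u*) solve the KKT system, and let (w, u) solve the perturbed KKT system with parameters μ > 0 and v ∈ ℝ^{n−1} satisfying ‖v‖_∞ < Cμ. Then (w*)^T u + w^T u* ≤ (2C + n)μ. -/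
open Matrix Filter Topology

noncomputable section

attribute [local instance] Matrix.normedAddCommGroup Matrix.normedSpace

/-!
Since `informationMatrix K M = (Kᵀ M⁻¹ K)⁻¹` is the Loewner minimum of `L M Lᵀ` over the left
inverses `L` of `K`, it is Loewner-concave in `M`; as `Ψ` is convex and antitone, the criterion
`F` is convex on `{w | M(w) ≻ 0}`, so its gradient is monotone: `⟪g w - g w*, w - w*⟫ ≥ 0`.
Subtracting the two stationarity conditions turns this into `⟪u - u* + v, w - w*⟫ ≥ 0` (the
multipliers drop out because `∑ (w - w*) = 0`), and expanding gives
`w*ᵀu + wᵀu* ≤ wᵀu + w*ᵀu* + ⟪v, w - w*⟫ ≤ nμ + 0 + Cμ ‖w - w*‖₁ ≤ (n + 2C)μ`.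
-/

theorem ConvexOn.hasFDerivAt_apply_sub_le {E : Type*} [NormedAddCommGroup E] [NormedSpace ℝ E]
    {s : Set E} {f : E → ℝ} {x y : E} {f'x f'y : E →L[ℝ] ℝ} (hf : ConvexOn ℝ s f)
    (hx : x ∈ s) (hy : y ∈ s) (hfx : HasFDerivAt f f'x x) (hfy : HasFDerivAt f f'y y) :
    f'x (y - x) ≤ f'y (y - x) := by
  let φ : ℝ → ℝ := f ∘ AffineMap.lineMap x y
  have hφ : ConvexOn ℝ (Set.Icc 0 1) φ :=
    (hf.comp_affineMap _).subset (fun _ ht => hf.1.lineMap_mem hx hy ht) (convex_Icc 0 1)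
  have hφ₀ : HasDerivAt φ (f'x (y - x)) 0 :=
    hfx.comp_hasDerivAt_of_eq 0 AffineMap.hasDerivAt_lineMap (AffineMap.lineMap_apply_zero x y).symm
  have hφ₁ : HasDerivAt φ (f'y (y - x)) 1 :=
    hfy.comp_hasDerivAt_of_eq 1 AffineMap.hasDerivAt_lineMap (AffineMap.lineMap_apply_one x y).symm
  have h0 : (0 : ℝ) ∈ Set.Icc 0 1 := ⟨le_rfl, zero_le_one⟩
  have h1 : (1 : ℝ) ∈ Set.Icc 0 1 := ⟨zero_le_one, le_rfl⟩
  exact (hφ.le_slope_of_hasDerivAt h0 h1 zero_lt_one hφ₀).trans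
    (hφ.slope_le_of_hasDerivAt h0 h1 zero_lt_one hφ₁)

theorem sum_mul_add_sum_mul_le {ι : Type*} [Fintype ι] {w w' u u' e : ι → ℝ} {c : ℝ}
    (hw : ∀ i, 0 ≤ w i) (hw' : ∀ i, 0 ≤ w' i) (he : ∀ i, |e i| ≤ c)
    (hmono : 0 ≤ ∑ i, (u i - u' i + e i) * (w i - w' i)) :
    ∑ i, w' i * u i + ∑ i, w i * u' i ≤
      ∑ i, w i * u i + ∑ i, w' i * u' i + c * ∑ i, (w i + w' i) := by
  have hcross : ∑ i, w' i * u i + ∑ i, w i * u' i = ∑ i, w i * u i + ∑ i, w' i * u' i +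
      ∑ i, e i * (w i - w' i) - ∑ i, (u i - u' i + e i) * (w i - w' i) := by
    simp only [← Finset.sum_add_distrib, ← Finset.sum_sub_distrib]
    exact Finset.sum_congr rfl fun i _ => by ring
  have he' : ∑ i, e i * (w i - w' i) ≤ c * ∑ i, (w i + w' i) := by
    rw [Finset.mul_sum]
    refine Finset.sum_le_sum fun i _ => ?_
    have hd : |w i - w' i| ≤ w i + w' i := by
      rw [abs_sub_le_iff]; constructor <;> linarith [hw i, hw' i]
    calc e i * (w i - w' i) ≤ |e i| * |w i - w' i| := by rw [← abs_mul]; exact le_abs_self _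
      _ ≤ c * (w i + w' i) := mul_le_mul (he i) hd (abs_nonneg _) ((abs_nonneg _).trans (he i))
  linarith

namespace Matrix

variable {ι κ : Type*}

theorem convex_setOf_posDef [Fintype ι] : Convex ℝ {M : Matrix ι ι ℝ | M.PosDef} :=
  convex_iff_forall_pos.mpr fun _ h₁ _ h₂ _ _ ha hb _ => (h₁.smul ha).add (h₂.smul hb)

theorem mulVec_injective_of_rank_eq [Fintype κ] {K : Matrix ι κ ℝ}
    (hK : K.rank = Fintype.card κ) : Function.Injective K.mulVec := by
  rw [mulVec_injective_iff, linearIndependent_iff_card_eq_finrank_span, ← hK,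
    rank_eq_finrank_span_cols, Set.finrank]

variable [Fintype ι] [DecidableEq ι] [Fintype κ]

theorem PosDef.transpose_mul_inv_mul {K : Matrix ι κ ℝ} {M : Matrix ι ι ℝ}
    (hK : Function.Injective K.mulVec) (hM : M.PosDef) : (Kᵀ * M⁻¹ * K).PosDef := by
  simpa only [conjTranspose_eq_transpose_of_trivial] using hM.inv.conjTranspose_mul_mul_same hK

variable [DecidableEq κ]

def informationMatrix (K : Matrix ι κ ℝ) (M : Matrix ι ι ℝ) : Matrix κ κ ℝ := (Kᵀ * M⁻¹ * K)⁻¹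

/-- The Gauss–Markov left inverse of `K`: it attains the minimum of `L M Lᵀ` over `L * K = 1`. -/
def gaussMarkov (K : Matrix ι κ ℝ) (M : Matrix ι ι ℝ) : Matrix κ ι ℝ :=
  informationMatrix K M * Kᵀ * M⁻¹

variable {K : Matrix ι κ ℝ} {M : Matrix ι ι ℝ}

theorem posDef_informationMatrix (hK : Function.Injective K.mulVec) (hM : M.PosDef) :
    (informationMatrix K M).PosDef :=
  (hM.transpose_mul_inv_mul hK).inv

theorem gaussMarkov_mul (hK : Function.Injective K.mulVec) (hM : M.PosDef) :
    gaussMarkov K M * K = 1 := by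
  rw [gaussMarkov, informationMatrix, Matrix.mul_assoc, Matrix.mul_assoc, ← Matrix.mul_assoc Kᵀ]
  exact nonsing_inv_mul _ ((isUnit_iff_isUnit_det _).mp (hM.transpose_mul_inv_mul hK).isUnit)

theorem mul_transpose_gaussMarkov (hK : Function.Injective K.mulVec) (hM : M.PosDef) :
    M * (gaussMarkov K M)ᵀ = K * informationMatrix K M := by
  have hMs : M⁻¹ᵀ = M⁻¹ := isHermitian_iff_isSymm.mp hM.inv.isHermitian
  have hIs : (informationMatrix K M)ᵀ = informationMatrix K M :=
    isHermitian_iff_isSymm.mp (posDef_informationMatrix hK hM).isHermitian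
  rw [gaussMarkov, transpose_mul, transpose_mul, hMs, hIs, transpose_transpose,
    mul_nonsing_inv_cancel_left _ _ ((isUnit_iff_isUnit_det _).mp hM.isUnit)]

theorem mul_mul_transpose_gaussMarkov (hK : Function.Injective K.mulVec) (hM : M.PosDef)
    {L : Matrix κ ι ℝ} (hL : L * K = 1) :
    L * M * (gaussMarkov K M)ᵀ = informationMatrix K M := by
  rw [Matrix.mul_assoc, mul_transpose_gaussMarkov hK hM, ← Matrix.mul_assoc, hL, Matrix.one_mul]

theorem gaussMarkov_mul_mul_transpose (hK : Function.Injective K.mulVec) (hM : M.PosDef) :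
    gaussMarkov K M * M * (gaussMarkov K M)ᵀ = informationMatrix K M :=
  mul_mul_transpose_gaussMarkov hK hM (gaussMarkov_mul hK hM)

theorem posSemidef_mul_mul_transpose_sub_informationMatrix (hK : Function.Injective K.mulVec)
    (hM : M.PosDef) {L : Matrix κ ι ℝ} (hL : L * K = 1) :
    (L * M * Lᵀ - informationMatrix K M).PosSemidef := by
  set L₀ := gaussMarkov K M
  have h₁ : L * M * L₀ᵀ = informationMatrix K M := mul_mul_transpose_gaussMarkov hK hM hL
  have h₂ : L₀ * M * Lᵀ = informationMatrix K M := by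
    rw [← (isHermitian_iff_isSymm.mp (posDef_informationMatrix hK hM).isHermitian), ← h₁,
      transpose_mul, transpose_mul, transpose_transpose, isHermitian_iff_isSymm.mp hM.isHermitian,
      Matrix.mul_assoc]
  have h₃ : L₀ * M * L₀ᵀ = informationMatrix K M := gaussMarkov_mul_mul_transpose hK hM
  have hsq : (L - L₀) * M * (L - L₀)ᵀ = L * M * Lᵀ - informationMatrix K M := by
    rw [transpose_sub, Matrix.sub_mul, Matrix.sub_mul, Matrix.mul_sub, Matrix.mul_sub, h₁, h₂, h₃]
    abel
  rw [← hsq, ← conjTranspose_eq_transpose_of_trivial]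
  exact hM.posSemidef.mul_mul_conjTranspose_same _

theorem posSemidef_informationMatrix_add_sub (hK : Function.Injective K.mulVec)
    {M₁ M₂ : Matrix ι ι ℝ} (h₁ : M₁.PosDef) (h₂ : M₂.PosDef) {a b : ℝ} (ha : 0 < a) (hb : 0 < b) :
    (informationMatrix K (a • M₁ + b • M₂) -
      (a • informationMatrix K M₁ + b • informationMatrix K M₂)).PosSemidef := by
  have hN : (a • M₁ + b • M₂).PosDef := (h₁.smul ha).add (h₂.smul hb)
  set L := gaussMarkov K (a • M₁ + b • M₂)
  have hL : L * K = 1 := gaussMarkov_mul hK hN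
  have hsplit : informationMatrix K (a • M₁ + b • M₂) -
      (a • informationMatrix K M₁ + b • informationMatrix K M₂) =
      a • (L * M₁ * Lᵀ - informationMatrix K M₁) + b • (L * M₂ * Lᵀ - informationMatrix K M₂) := by
    rw [← gaussMarkov_mul_mul_transpose hK hN, Matrix.mul_add, Matrix.add_mul, Matrix.mul_smul,
      Matrix.smul_mul, Matrix.mul_smul, Matrix.smul_mul, smul_sub, smul_sub]
    abel
  rw [hsplit]
  exact ((posSemidef_mul_mul_transpose_sub_informationMatrix hK h₁ hL).smul ha.le).add
    ((posSemidef_mul_mul_transpose_sub_informationMatrix hK h₂ hL).smul hb.le)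

theorem convexOn_comp_informationMatrix {Ψ : Matrix κ κ ℝ → ℝ}
    (hconv : ConvexOn ℝ {U | U.PosDef} Ψ)
    (hanti : ∀ U V : Matrix κ κ ℝ, U.IsHermitian → V.PosDef → (U - V).PosSemidef → Ψ U ≤ Ψ V)
    (hK : Function.Injective K.mulVec) :
    ConvexOn ℝ {M : Matrix ι ι ℝ | M.PosDef} (fun M => Ψ (informationMatrix K M)) := by
  refine convexOn_iff_forall_pos.mpr ⟨convex_setOf_posDef, fun M₁ h₁ M₂ h₂ a b ha hb hab => ?_⟩
  have hI₁ := posDef_informationMatrix hK h₁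
  have hI₂ := posDef_informationMatrix hK h₂
  calc Ψ (informationMatrix K (a • M₁ + b • M₂))
      ≤ Ψ (a • informationMatrix K M₁ + b • informationMatrix K M₂) :=
        hanti _ _ (posDef_informationMatrix hK ((h₁.smul ha).add (h₂.smul hb))).isHermitian
          ((hI₁.smul ha).add (hI₂.smul hb)) (posSemidef_informationMatrix_add_sub hK h₁ h₂ ha hb)
    _ ≤ a • Ψ (informationMatrix K M₁) + b • Ψ (informationMatrix K M₂) :=
        hconv.2 hI₁ hI₂ ha.le hb.le hab

end Matrix

theorem Assumption1.convexOn {k : ℕ} {Ψ : Matrix (Fin k) (Fin k) ℝ → ℝ} (hΨ : Assumption1 k Ψ) :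
    ConvexOn ℝ {U | U.PosDef} Ψ := by
  refine ⟨Matrix.convex_setOf_posDef, fun U hU V hV a b ha hb hab => ?_⟩
  obtain rfl : b = 1 - a := by linarith
  exact hΨ.convex U V hU hV a ha (by linarith)

theorem Mmat_eq_linearCombination {n m : ℕ} (A : Fin n → Matrix (Fin m) (Fin m) ℝ) :
    Mmat A = Fintype.linearCombination ℝ A := by
  ext w
  rw [Mmat, Fintype.linearCombination_apply]

theorem dotProduct_Mmat_mulVec {n m : ℕ} (A : Fin n → Matrix (Fin m) (Fin m) ℝ)
    (w : Fin n → ℝ) (x y : Fin m → ℝ) : y ⬝ᵥ (Mmat A w *ᵥ x) = ∑ i, w i * (y ⬝ᵥ (A i *ᵥ x)) := by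
  simp [Mmat, Matrix.sum_mulVec, Matrix.smul_mulVec, dotProduct_sum]

/-- A vector `x` seen by `M(w₀)` is seen by some `A i`, hence by every `M(w)` with `w > 0`. -/
theorem posDef_Mmat_of_pos {n m : ℕ} {A : Fin n → Matrix (Fin m) (Fin m) ℝ}
    (hA : ∀ i, (A i).PosSemidef) {w₀ w : Fin n → ℝ} (h₀ : (Mmat A w₀).PosDef)
    (hw : ∀ i, 0 < w i) : (Mmat A w).PosDef := by
  refine Matrix.PosDef.of_dotProduct_mulVec_pos ?_ fun x hx => ?_
  · exact (Matrix.posSemidef_sum _ fun i _ => (hA i).smul (hw i).le).isHermitian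
  have hq : ∀ i, 0 ≤ star x ⬝ᵥ (A i *ᵥ x) := fun i => (hA i).dotProduct_mulVec_nonneg x
  have h₀x := h₀.dotProduct_mulVec_pos hx
  rw [dotProduct_Mmat_mulVec] at h₀x ⊢
  obtain ⟨i, -, hi⟩ := Finset.exists_ne_zero_of_sum_ne_zero h₀x.ne'
  have hqi : 0 < star x ⬝ᵥ (A i *ᵥ x) := (hq i).lt_of_ne' (right_ne_zero_of_mul hi)
  exact (mul_pos (hw i) hqi).trans_le
    (Finset.single_le_sum (fun j _ => mul_nonneg (hw j).le (hq j)) (Finset.mem_univ i))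

theorem kkt_perturbed_bound_general (n m k : ℕ)
    (A : Fin n → Matrix (Fin m) (Fin m) ℝ) (hA : ∀ i, (A i).PosSemidef)
    (K : Matrix (Fin m) (Fin k) ℝ) (hK : K.rank = k)
    (Ψ : Matrix (Fin k) (Fin k) ℝ → ℝ)
    (hΨ : Assumption1 k Ψ)
    (g : (Fin n → ℝ) → Fin n → ℝ)
    (hg : ∀ w : Fin n → ℝ, (Mmat A w).PosDef →
      HasFDerivAt (fun z => Ψ ((Kᵀ * (Mmat A z)⁻¹ * K)⁻¹))
        (∑ i, g w i • ContinuousLinearMap.proj (R := ℝ) (φ := fun _ : Fin n => ℝ) i) w)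
    (wstar ustar : Fin n → ℝ)
    (hKKT : wstar ∈ Omega n ∧ (Mmat A wstar).PosDef ∧ (∀ i, 0 ≤ ustar i) ∧
      (∀ i, ustar i * wstar i = 0) ∧ ∃ lam : ℝ, ∀ i, g wstar i - ustar i = lam)
    (C : ℝ) (hC : 0 < C) (μ : ℝ) (hμ : 0 < μ) (v : Fin (n - 1) → ℝ)
    (hv : ∀ i, |v i| < C * μ)
    (w u : Fin n → ℝ)
    (hpert : (∀ i, 0 < w i) ∧ (∑ i, w i = 1) ∧ (∀ i, u i * w i = μ) ∧
      ∃ lam : ℝ, ∀ i : Fin n, g w i - u i =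
        lam + (if h : (i : ℕ) < n - 1 then v ⟨i, h⟩ else 0)) :
    ∑ i, wstar i * u i + ∑ i, w i * ustar i ≤ (2 * C + n) * μ := by
  obtain ⟨hwstar, hMstar, -, hcompl, lamstar, hlamstar⟩ := hKKT
  obtain ⟨hwpos, hwsum, hcompl', lam, hlam⟩ := hpert
  have hKinj := Matrix.mulVec_injective_of_rank_eq (hK.trans (Fintype.card_fin k).symm)
  have hMw : (Mmat A w).PosDef := posDef_Mmat_of_pos hA hMstar hwpos
  have hF : ConvexOn ℝ {z | (Mmat A z).PosDef} (fun z => Ψ ((Kᵀ * (Mmat A z)⁻¹ * K)⁻¹)) := by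
    rw [Mmat_eq_linearCombination]
    exact (Matrix.convexOn_comp_informationMatrix hΨ.convexOn hΨ.decreasing hKinj).comp_linearMap _
  have hmono := hF.hasFDerivAt_apply_sub_le hMstar hMw (hg wstar hMstar) (hg w hMw)
  simp only [_root_.sum_apply, _root_.smul_apply, ContinuousLinearMap.proj_apply, Pi.sub_apply,
    smul_eq_mul] at hmono
  set e : Fin n → ℝ := fun i => if h : (i : ℕ) < n - 1 then v ⟨i, h⟩ else 0
  have he : ∀ i, |e i| ≤ C * μ := fun i => by
    by_cases h : (i : ℕ) < n - 1
    · simpa [e, h] using (hv _).le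
    · simpa [e, h] using (mul_pos hC hμ).le
  have hgap : 0 ≤ ∑ i, (u i - ustar i + e i) * (w i - wstar i) := by
    have hsum : ∑ i, (w i - wstar i) = 0 := by
      rw [Finset.sum_sub_distrib, hwsum, hwstar.2, sub_self]
    have hdiff : ∀ i, u i - ustar i + e i = g w i - g wstar i - (lam - lamstar) := fun i => by
      linarith [hlam i, hlamstar i]
    simp only [hdiff, sub_mul, Finset.sum_sub_distrib, ← Finset.mul_sum, hsum, mul_zero, sub_zero]
    linarith
  calc ∑ i, wstar i * u i + ∑ i, w i * ustar i
      ≤ ∑ i, w i * u i + ∑ i, wstar i * ustar i + C * μ * ∑ i, (w i + wstar i) :=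
        sum_mul_add_sum_mul_le (fun i => (hwpos i).le) hwstar.1 he hgap
    _ = (2 * C + n) * μ := by
      simp only [Finset.sum_add_distrib, hwsum, hwstar.2, mul_comm (w _), hcompl',
        mul_comm (wstar _), hcompl, Finset.sum_const, Finset.card_univ, Fintype.card_fin,
        nsmul_eq_mul]
      ring

/-- Bound relating a KKT point and a perturbed KKT point:
`(w*)ᵀ u + wᵀ u* ≤ (2C + n) μ`. -/
theorem kkt_perturbed_bound (n m k : ℕ) (hn : 2 ≤ n) (hm : 1 ≤ m) (hk : 1 ≤ k) (hkm : k ≤ m)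
    (A : Fin n → Matrix (Fin m) (Fin m) ℝ) (hA : ∀ i, (A i).PosSemidef)
    (hex : ∃ w ∈ Omega n, (Mmat A w).PosDef)
    (K : Matrix (Fin m) (Fin k) ℝ) (hK : K.rank = k)
    (Ψ : Matrix (Fin k) (Fin k) ℝ → ℝ)
    (hΨ : Assumption1 k Ψ)
    (g : (Fin n → ℝ) → Fin n → ℝ)
    (hg : ∀ w : Fin n → ℝ, (Mmat A w).PosDef →
      HasFDerivAt (fun z => Ψ ((Kᵀ * (Mmat A z)⁻¹ * K)⁻¹))
        (∑ i, g w i • ContinuousLinearMap.proj (R := ℝ) (φ := fun _ : Fin n => ℝ) i) w)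
    (wstar ustar : Fin n → ℝ)
    (hKKT : wstar ∈ Omega n ∧ (Mmat A wstar).PosDef ∧ (∀ i, 0 ≤ ustar i) ∧
      (∀ i, ustar i * wstar i = 0) ∧ ∃ lam : ℝ, ∀ i, g wstar i - ustar i = lam)
    (C : ℝ) (hC : 0 < C) (μ : ℝ) (hμ : 0 < μ) (v : Fin (n - 1) → ℝ)
    (hv : ∀ i, |v i| < C * μ)
    (w u : Fin n → ℝ)
    (hpert : (∀ i, 0 < w i) ∧ (∑ i, w i = 1) ∧ (∀ i, u i * w i = μ) ∧
      ∃ lam : ℝ, ∀ i : Fin n, g w i - u i =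
        lam + (if h : (i : ℕ) < n - 1 then v ⟨i, h⟩ else 0)) :
    ∑ i, wstar i * u i + ∑ i, w i * ustar i ≤ (2 * C + n) * μ :=
  kkt_perturbed_bound_general n m k A hA K hK Ψ hΨ g hg wstar ustar hKKT C hC μ hμ v hv w u hpert
end
end
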